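/- Let G be a CGNN as in the stated setup, satisfying Hypothesis 2 on the convolutional filters and Hypothesis 4 on the fully connected layer. Then the image of each layer of G consists of compactly supported functions with a common support; precisely, for every l = 1,…,L there exists N_l ∈ ℕ such that the image of ℝ^S under the composition of the first l blocks (σ̃_l ∘ Ψ̃_l) ∘ ⋯ ∘ (σ̃_1 ∘ Ψ₁) is contained in (span{φ_{j_l,n} : −N_l ≤ n ≤ N_l})^{c_l}, and similarly the image of Ψ̃_{l+1} applied after the first l blocks is contained in (span{φ_{j_{l+1},n} : −N_{l+1} ≤ n ≤ N_{l+1}})^{c_{l+1}}. -/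

import Mathlib

/-!
Statement 18: the image of each layer of a CGNN (with filters and biases that are finite
combinations of the φ_{j_l,·} and a fully connected layer with image in a fixed finite
span of translates) consists of functions lying in a common finite span
(span{φ_{j_l,n} : −N_l ≤ n ≤ N_l})^{c_l}, i.e. compactly supported with a common support.
-/

open MeasureTheory Real
open scoped Classical


open MeasureTheory Real
open scoped Classical

/-- The Hilbert space `L²(ℝ)`. -/
noncomputable abbrev H : Type := MeasureTheory.Lp ℝ 2 (volume : Measure ℝ)

/-- The class in `L²(ℝ)` of a function (zero if the function is not square integrable). -/
noncomputable def toLp2 (f : ℝ → ℝ) : H :=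
  if h : MemLp f 2 volume then h.toLp f else 0

/-- Orthogonal projection onto a closed subspace of `L²(ℝ)`. -/
noncomputable def projCL (K : Submodule ℝ H) (hK : IsClosed (K : Set H)) : H → H :=
  haveI : CompleteSpace K := hK.completeSpace_coe
  fun f => (K.orthogonalProjectionOnto f : H)

/-- `φ_{j,n}(x) = 2^{j/2} φ(2^j x − n)`. -/
noncomputable def phiJN (φ : ℝ → ℝ) (j n : ℤ) : ℝ → ℝ :=
  fun x => (2 : ℝ) ^ ((j : ℝ) / 2) * φ ((2 : ℝ) ^ j * x - n)

/-- `η_ν(r) = ∫∫ φ(t) φ(z) φ(z − 2^ν t + r) dz dt`. -/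
noncomputable def etaNu (φ : ℝ → ℝ) (ν : ℕ) (r : ℤ) : ℝ :=
  ∫ t : ℝ, ∫ z : ℝ, φ t * φ z * φ (z - (2 : ℝ) ^ ν * t + r)

/-- `φ_{j,n}` as an element of `L²(ℝ)`. -/
noncomputable def phiLp (φ : ℝ → ℝ) (j n : ℤ) : H := toLp2 (phiJN φ j n)

/-- The span of `{φ_{j,n} : −N ≤ n ≤ N}` in `L²(ℝ)`. -/
noncomputable def spanPhi (φ : ℝ → ℝ) (j : ℤ) (N : ℕ) : Submodule ℝ H :=
  Submodule.span ℝ ((fun n : ℤ => phiLp φ j n) '' (Set.Icc (-(N : ℤ)) N))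

/-- Continuous convolution on `ℝ`. -/
noncomputable def conv (f g : ℝ → ℝ) : ℝ → ℝ := fun x => ∫ y, f y * g (x - y)

/-- A multiresolution analysis of `L²(ℝ)` with scaling function `φ`:
an increasing sequence of closed subspaces whose union is dense, whose intersection is
trivial, compatible with dyadic dilation, and such that the integer translates of `φ`
form an orthonormal basis of `V 0`. -/
structure IsMRA (φ : ℝ → ℝ) (V : ℤ → Submodule ℝ H) : Prop where
  closed : ∀ j : ℤ, IsClosed ((V j : Set H))
  mono : ∀ j : ℤ, V j ≤ V (j + 1)
  dense_iUnion : Dense (⋃ j : ℤ, (V j : Set H))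
  inter_trivial : ∀ f : H, (∀ j : ℤ, f ∈ V j) → f = 0
  dilate : ∀ (j : ℤ) (f : H),
      f ∈ V j ↔ toLp2 (fun x => f ((2 : ℝ) ^ (-j) * x)) ∈ V 0
  orthonormal : Orthonormal ℝ (fun n : ℤ => toLp2 (fun x => φ (x - n)))
  translates_mem : ∀ n : ℤ, toLp2 (fun x => φ (x - n)) ∈ V 0
  span_dense : V 0 ≤
      (Submodule.span ℝ (Set.range fun n : ℤ => toLp2 (fun x => φ (x - n)))).topologicalClosure

/-- Number of channels at layer `l` (0-indexed: `l = 0, …, L−1`): `c_l = 2^{L−1−l}`. -/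
abbrev cc (L l : ℕ) : ℕ := 2 ^ (L - 1 - l)

/-- Scale at layer `l` (0-indexed): `j_l = j₁ + l`. -/
abbrev jj (j₁ : ℤ) (l : ℕ) : ℤ := j₁ + l

/-- The data of a CGNN with `L` layers, latent dimension `S` and initial scale `j₁`:
a scaling function `φ` with its multiresolution spaces `V j` (closed subspaces of `L²(ℝ)`),
a nonlinearity `σ`, a fully connected layer `F·+b0`, and, for each convolutional layer,
filter coefficients `d` (with filters supported on `p = 0,…,pbar`) and biases. -/
structure CGNNData (L S : ℕ) (j₁ : ℤ) where
  /-- the scaling function -/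
  φ : ℝ → ℝ
  /-- the multiresolution spaces -/
  V : ℤ → Submodule ℝ H
  /-- the spaces are closed -/
  Vclosed : ∀ j : ℤ, IsClosed ((V j : Set H))
  /-- the nonlinearity -/
  σ : ℝ → ℝ
  /-- the linear part of the fully connected layer -/
  F : (Fin S → ℝ) →ₗ[ℝ] (Fin (2 ^ (L - 1)) → H)
  /-- the bias of the fully connected layer -/
  b0 : Fin (2 ^ (L - 1)) → H
  /-- the filters have scaling coefficients supported in `{0, …, pbar}` -/
  pbar : ℕ
  /-- `d l p i k` is the coefficient of `φ_{j_l,p}` in the filter `t^l_{i,k}` -/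
  d : ℕ → ℕ → ℕ → ℕ → ℝ
  /-- `bias l k` is the bias `b^l_k` of the `l`-th convolutional layer -/
  bias : ℕ → ℕ → H

namespace CGNNData

variable {L S : ℕ} {j₁ : ℤ}

/-- The filter `t^l_{i,k} = Σ_{p=0}^{pbar} d^l_{p,i,k} φ_{j_l,p}` (as a function). -/
noncomputable def filt (Γ : CGNNData L S j₁) (l i k : ℕ) : ℝ → ℝ :=
  fun x => ∑ p ∈ Finset.range (Γ.pbar + 1), Γ.d l p i k * phiJN Γ.φ (jj j₁ l) p x

/-- `σ̃_l = P_{V_{j_l}} ∘ σ` where `σ` acts pointwise. -/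
noncomputable def sigmaTilde (Γ : CGNNData L S j₁) (l : ℕ) (f : H) : H :=
  projCL (Γ.V (jj j₁ l)) (Γ.Vclosed _) (toLp2 fun x => Γ.σ (f x))

/-- `Ψ̃_{l+1} = P_{V_{j_{l+1}}} ∘ Ψ_{l+1}` : the continuous convolutional layer mapping the
channels at layer `l` to the channels at layer `l+1`. -/
noncomputable def psiT (Γ : CGNNData L S j₁) (l : ℕ) (f : Fin (cc L l) → H) :
    Fin (cc L (l + 1)) → H :=
  fun k => projCL (Γ.V (jj j₁ (l + 1))) (Γ.Vclosed _)
    ((toLp2 fun x => ∑ i : Fin (cc L l), conv (f i) (Γ.filt (l + 1) i k) x) +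
      Γ.bias (l + 1) k)

/-- The composition of the first `l+1` blocks of the network:
`Gaux 0 = σ̃_1 ∘ Ψ₁` and `Gaux (l+1) = σ̃_{l+2} ∘ Ψ̃_{l+2} ∘ Gaux l`. -/
noncomputable def Gaux (Γ : CGNNData L S j₁) : (l : ℕ) → (Fin S → ℝ) → (Fin (cc L l) → H)
  | 0 => fun z k => Γ.sigmaTilde 0 (Γ.F z k + Γ.b0 k)
  | l + 1 => fun z k => Γ.sigmaTilde (l + 1) (Γ.psiT l (Γ.Gaux l z) k)

/-- The generator `G : ℝ^S → (V_{j_L})^{c_L}`, `c_L = 1`. -/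
noncomputable def G (Γ : CGNNData L S j₁) : (Fin S → ℝ) → (Fin (cc L (L - 1)) → H) :=
  Γ.Gaux (L - 1)

/-- The matrix `D^l` of Hypothesis 2, built from the order-0 and order-1 scaling
coefficients of the filters of the `l`-th layer. -/
noncomputable def Dmat (Γ : CGNNData L S j₁) (l : ℕ) :
    Matrix (Fin (cc L (l - 1))) (Fin (cc L (l - 1))) ℝ :=
  fun i k => if (k : ℕ) < cc L l then Γ.d l 0 i k else Γ.d l 1 i ((k : ℕ) - cc L l)

end CGNNData

/-! ### Auxiliary lemmas -/

open scoped RealInnerProductSpace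

theorem toLp2_coeFn {f : ℝ → ℝ} (hf : MemLp f 2 volume) :
    (toLp2 f : ℝ → ℝ) =ᵐ[volume] f := by
  rw [toLp2, dif_pos hf]; exact hf.coeFn_toLp

theorem toLp2_of_not {f : ℝ → ℝ} (hf : ¬ MemLp f 2 volume) : toLp2 f = 0 := by
  rw [toLp2, dif_neg hf]

theorem toLp2_congr {f g : ℝ → ℝ} (h : f =ᵐ[volume] g) : toLp2 f = toLp2 g := by
  by_cases hf : MemLp f 2 volume
  · have hg : MemLp g 2 volume := (memLp_congr_ae h).mp hf
    rw [toLp2, toLp2, dif_pos hf, dif_pos hg]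
    exact (MemLp.toLp_eq_toLp_iff hf hg).mpr h
  · have hg : ¬ MemLp g 2 volume := fun hg => hf ((memLp_congr_ae h).mpr hg)
    rw [toLp2_of_not hf, toLp2_of_not hg]

theorem toLp2_smul {f : ℝ → ℝ} (hf : MemLp f 2 volume) (c : ℝ) :
    toLp2 (fun x => c * f x) = c • toLp2 f := by
  rw [toLp2, toLp2, dif_pos (hf.const_mul c), dif_pos hf]
  exact MemLp.toLp_const_smul c hf

theorem inner_H (f g : H) : ⟪f, g⟫ = ∫ x : ℝ, f x * g x := by
  rw [MeasureTheory.L2.inner_def]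
  simp [RCLike.inner_apply]
  congr 1; funext a; ring

theorem inner_eq_integral_of_ae {f g : H} {f₀ g₀ : ℝ → ℝ} (hf : ⇑f =ᵐ[volume] f₀)
    (hg : ⇑g =ᵐ[volume] g₀) : ⟪f, g⟫ = ∫ x, f₀ x * g₀ x := by
  rw [inner_H f g]
  exact integral_congr_ae (hf.mul hg)

theorem aeEq_comp_mul_left {f g : ℝ → ℝ} {c : ℝ} (hc : c ≠ 0) (h : f =ᵐ[volume] g) :
    (fun x => f (c * x)) =ᵐ[volume] fun x => g (c * x) := by
  simp only [Filter.EventuallyEq, ae_iff] at h ⊢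
  rw [show {x | ¬ f (c * x) = g (c * x)} = (c * ·) ⁻¹' {x | ¬ f x = g x} from rfl,
    Real.volume_preimage_mul_left hc, h, mul_zero]

theorem memℒp_comp_mul_left {f : ℝ → ℝ} (hf : MemLp f 2 volume) {c : ℝ} (hc : c ≠ 0) :
    MemLp (fun x => f (c * x)) 2 volume := by
  have hemb : MeasurableEmbedding (c * · : ℝ → ℝ) :=
    (Homeomorph.mulLeft₀ c hc).isClosedEmbedding.measurableEmbedding
  have hmap : MemLp f 2 (Measure.map (c * ·) volume) := by
    rw [Real.map_volume_mul_left hc]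
    exact hf.smul_measure ENNReal.ofReal_ne_top
  exact hemb.memLp_map_measure_iff.mp hmap

theorem memℒp_comp_sub {f : ℝ → ℝ} (hf : MemLp f 2 volume) (d : ℝ) :
    MemLp (fun x => f (x - d)) 2 volume :=
  hf.comp_measurePreserving (measurePreserving_sub_right volume d)

theorem inner_zero_of_mem_span {Sset : Set H} {v x : H} (hx : x ∈ Submodule.span ℝ Sset)
    (h : ∀ u ∈ Sset, ⟪u, v⟫ = 0) : ⟪x, v⟫ = 0 := by
  induction hx using Submodule.span_induction with
  | mem u hu => exact h u hu
  | zero => exact inner_zero_left v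
  | add u w _ _ hu hw => rw [inner_add_left, hu, hw, add_zero]
  | smul a u _ hu => rw [inner_smul_left, hu, mul_zero]

theorem memℒp_phiJN {φ : ℝ → ℝ} (hφ : MemLp φ 2 volume) (j n : ℤ) :
    MemLp (phiJN φ j n) 2 volume := by
  have h1 : MemLp (fun x => φ (x - (n : ℝ))) 2 volume := memℒp_comp_sub hφ _
  have h2 : MemLp (fun x => φ ((2:ℝ) ^ j * x - (n:ℝ))) 2 volume :=
    memℒp_comp_mul_left h1 (zpow_ne_zero j two_ne_zero)
  exact h2.const_mul ((2:ℝ) ^ ((j:ℝ)/2))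

theorem phiLp_coeFn {φ : ℝ → ℝ} (hφ : MemLp φ 2 volume) (j n : ℤ) :
    ⇑(phiLp φ j n) =ᵐ[volume] phiJN φ j n :=
  toLp2_coeFn (memℒp_phiJN hφ j n)

theorem two_zpow_pos (j : ℤ) : (0:ℝ) < (2:ℝ) ^ j := by positivity

theorem phiLp_orthonormal {φ : ℝ → ℝ} (hφ : MemLp φ 2 volume)
    (horth : Orthonormal ℝ (fun n : ℤ => toLp2 (fun x => φ (x - n)))) (j n m : ℤ) :
    ⟪phiLp φ j n, phiLp φ j m⟫ = if n = m then (1:ℝ) else 0 := by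
  have hito := orthonormal_iff_ite.mp horth n m
  have h1 : ⟪phiLp φ j n, phiLp φ j m⟫ = ∫ x, phiJN φ j n x * phiJN φ j m x :=
    inner_eq_integral_of_ae (phiLp_coeFn hφ j n) (phiLp_coeFn hφ j m)
  have h2 : ⟪toLp2 (fun x : ℝ => φ (x - (n:ℝ))), toLp2 (fun x : ℝ => φ (x - (m:ℝ)))⟫
      = ∫ x, φ (x - (n:ℝ)) * φ (x - (m:ℝ)) :=
    inner_eq_integral_of_ae (toLp2_coeFn (memℒp_comp_sub hφ _))
      (toLp2_coeFn (memℒp_comp_sub hφ _))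
  have hpt : ∀ x : ℝ, phiJN φ j n x * phiJN φ j m x
      = (2:ℝ)^j * ((fun y => φ (y - (n:ℝ)) * φ (y - (m:ℝ))) ((2:ℝ)^j * x)) := by
    intro x
    have hh : (2:ℝ) ^ ((j:ℝ)/2) * (2:ℝ) ^ ((j:ℝ)/2) = (2:ℝ) ^ j := by
      rw [← Real.rpow_add two_pos, ← Real.rpow_intCast 2 j]
      norm_num
    calc phiJN φ j n x * phiJN φ j m x
        = ((2:ℝ)^((j:ℝ)/2) * (2:ℝ)^((j:ℝ)/2)) *
            (φ ((2:ℝ)^j * x - (n:ℝ)) * φ ((2:ℝ)^j * x - (m:ℝ))) := by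
          simp only [phiJN]; ring
      _ = (2:ℝ)^j * ((fun y => φ (y - (n:ℝ)) * φ (y - (m:ℝ))) ((2:ℝ)^j * x)) := by
          rw [hh]
  have key : (∫ x, phiJN φ j n x * phiJN φ j m x)
      = ∫ x, φ (x - (n:ℝ)) * φ (x - (m:ℝ)) := by
    calc (∫ x, phiJN φ j n x * phiJN φ j m x)
        = ∫ x, (2:ℝ)^j * ((fun y => φ (y - (n:ℝ)) * φ (y - (m:ℝ))) ((2:ℝ)^j * x)) := by
          simp only [hpt]
      _ = (2:ℝ)^j * ∫ x, (fun y => φ (y - (n:ℝ)) * φ (y - (m:ℝ))) ((2:ℝ)^j * x) :=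
          integral_const_mul _ _
      _ = (2:ℝ)^j * (|((2:ℝ)^j)⁻¹| • ∫ y, φ (y - (n:ℝ)) * φ (y - (m:ℝ))) := by
          rw [Measure.integral_comp_mul_left (fun y => φ (y - (n:ℝ)) * φ (y - (m:ℝ))) ((2:ℝ)^j)]
      _ = ∫ y, φ (y - (n:ℝ)) * φ (y - (m:ℝ)) := by
          rw [abs_of_pos (inv_pos.mpr (two_zpow_pos j)), smul_eq_mul, ← mul_assoc,
            mul_inv_cancel₀ (ne_of_gt (two_zpow_pos j)), one_mul]
  rw [h1, key, ← h2, hito]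

theorem phiLp_mem_V {φ : ℝ → ℝ} {V : ℤ → Submodule ℝ H} (hMRA : IsMRA φ V)
    (hφ : MemLp φ 2 volume) (j n : ℤ) : phiLp φ j n ∈ V j := by
  rw [hMRA.dilate]
  have h1 : (fun x => (phiLp φ j n : ℝ → ℝ) ((2:ℝ)^(-j) * x)) =ᵐ[volume]
      (fun x => phiJN φ j n ((2:ℝ)^(-j) * x)) :=
    aeEq_comp_mul_left (zpow_ne_zero _ two_ne_zero) (phiLp_coeFn hφ j n)
  have h2 : (fun x => phiJN φ j n ((2:ℝ)^(-j) * x))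
      = fun x => (2:ℝ)^((j:ℝ)/2) * φ (x - (n:ℝ)) := by
    funext x
    simp only [phiJN]
    congr 2
    rw [← mul_assoc, ← zpow_add₀ (two_ne_zero' ℝ)]
    simp
  rw [toLp2_congr (h1.trans (by rw [h2]))]
  rw [toLp2_smul (memℒp_comp_sub hφ _) _]
  exact Submodule.smul_mem _ _ (hMRA.translates_mem n)

theorem eq_zero_of_inner_phiLp_zero {φ : ℝ → ℝ} {V : ℤ → Submodule ℝ H} (hMRA : IsMRA φ V)
    (hφ : MemLp φ 2 volume) {j : ℤ} {y : H} (hy : y ∈ V j)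
    (horth : ∀ n : ℤ, ⟪y, phiLp φ j n⟫ = 0) : y = 0 := by
  have hcne : ((2:ℝ) ^ (-j)) ≠ 0 := zpow_ne_zero _ two_ne_zero
  have hymem : MemLp (fun x => (y : ℝ → ℝ) ((2:ℝ) ^ (-j) * x)) 2 volume :=
    memℒp_comp_mul_left (Lp.memLp y) hcne
  set w : H := toLp2 (fun x => (y : ℝ → ℝ) ((2:ℝ) ^ (-j) * x)) with hw
  have hw0 : w ∈ V 0 := (hMRA.dilate j y).mp hy
  have hwcoe : ⇑w =ᵐ[volume] fun x => (y : ℝ → ℝ) ((2:ℝ) ^ (-j) * x) := toLp2_coeFn hymem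
  have harg : ∀ x : ℝ, (2:ℝ)^j * ((2:ℝ)^(-j) * x) = x := by
    intro x
    rw [← mul_assoc, ← zpow_add₀ (two_ne_zero' ℝ)]
    simp
  have hwT : ∀ n : ℤ, ⟪w, toLp2 (fun x : ℝ => φ (x - (n:ℝ)))⟫ = 0 := by
    intro n
    have hyinner : (∫ x, (y:ℝ→ℝ) x * phiJN φ j n x) = 0 := by
      rw [← inner_eq_integral_of_ae (Filter.EventuallyEq.refl _ _) (phiLp_coeFn hφ j n)]
      exact horth n
    have h2 : (∫ x, (fun t => (y:ℝ→ℝ) t * phiJN φ j n t) ((2:ℝ)^(-j) * x)) = 0 := by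
      rw [Measure.integral_comp_mul_left (fun t => (y:ℝ→ℝ) t * phiJN φ j n t) ((2:ℝ)^(-j)),
        hyinner, smul_zero]
    have h4 : ∀ x : ℝ, (fun t => (y:ℝ→ℝ) t * phiJN φ j n t) ((2:ℝ)^(-j) * x)
        = (2:ℝ)^((j:ℝ)/2) * ((y:ℝ→ℝ) ((2:ℝ)^(-j)*x) * φ (x - (n:ℝ))) := by
      intro x
      simp only [phiJN, harg x]
      ring
    simp only [h4] at h2
    rw [integral_const_mul] at h2
    have hrne : ((2:ℝ)^((j:ℝ)/2)) ≠ 0 := ne_of_gt (Real.rpow_pos_of_pos two_pos _)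
    have h5 : (∫ x, (y:ℝ→ℝ) ((2:ℝ)^(-j)*x) * φ (x - (n:ℝ))) = 0 :=
      (mul_eq_zero.mp h2).resolve_left hrne
    rw [inner_eq_integral_of_ae hwcoe (toLp2_coeFn (memℒp_comp_sub hφ _))]
    exact h5
  have hspan : Submodule.span ℝ (Set.range fun n : ℤ => toLp2 (fun x : ℝ => φ (x - (n:ℝ))))
      ≤ (ℝ ∙ w)ᗮ := by
    rw [Submodule.span_le]
    rintro _ ⟨n, rfl⟩
    rw [SetLike.mem_coe, Submodule.mem_orthogonal_singleton_iff_inner_right]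
    exact hwT n
  have hclos : (Submodule.span ℝ (Set.range fun n : ℤ =>
      toLp2 (fun x : ℝ => φ (x - (n:ℝ))))).topologicalClosure ≤ (ℝ ∙ w)ᗮ :=
    Submodule.topologicalClosure_minimal _ hspan (Submodule.isClosed_orthogonal _)
  have hww : ⟪w, w⟫ = 0 :=
    Submodule.mem_orthogonal_singleton_iff_inner_right.mp (hclos (hMRA.span_dense hw0))
  have hwint : (∫ x, (y:ℝ→ℝ) ((2:ℝ)^(-j)*x) * (y:ℝ→ℝ) ((2:ℝ)^(-j)*x)) = 0 := by
    rw [← inner_eq_integral_of_ae hwcoe hwcoe]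
    exact hww
  have hy2 : (∫ x, (fun t => (y:ℝ→ℝ) t * (y:ℝ→ℝ) t) ((2:ℝ)^(-j) * x))
      = |((2:ℝ)^(-j))⁻¹| • ∫ x, (y:ℝ→ℝ) x * (y:ℝ→ℝ) x :=
    Measure.integral_comp_mul_left (fun t => (y:ℝ→ℝ) t * (y:ℝ→ℝ) t) ((2:ℝ)^(-j))
  have habs : |((2:ℝ)^(-j))⁻¹| ≠ 0 := by
    simp only [ne_eq, abs_eq_zero, inv_eq_zero]
    exact hcne
  have hyy : ⟪y, y⟫ = 0 := by
    rw [inner_H]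
    have : |((2:ℝ)^(-j))⁻¹| • (∫ x, (y:ℝ→ℝ) x * (y:ℝ→ℝ) x) = 0 := by
      rw [← hy2]
      exact hwint
    rcases smul_eq_zero.mp this with h | h
    · exact absurd h habs
    · exact h
  exact inner_self_eq_zero.mp hyy

theorem proj_mem_spanPhi {φ : ℝ → ℝ} {V : ℤ → Submodule ℝ H} (hMRA : IsMRA φ V)
    (hφ : MemLp φ 2 volume) {j : ℤ} (hK : IsClosed ((V j : Set H))) (g : H) (N : ℕ)
    (h : ∀ m : ℤ, m ∉ Set.Icc (-(N:ℤ)) (N:ℤ) → ⟪g, phiLp φ j m⟫ = 0) :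
    projCL (V j) hK g ∈ spanPhi φ j N := by
  haveI : CompleteSpace (V j) := hK.completeSpace_coe
  haveI : FiniteDimensional ℝ (spanPhi φ j N) :=
    FiniteDimensional.span_of_finite ℝ ((Set.finite_Icc _ _).image _)
  set x : H := projCL (V j) hK g with hxdef
  have hxproj : x = (((V j).orthogonalProjectionOnto g : V j) : H) := rfl
  have hxV : x ∈ V j := by rw [hxproj]; exact SetLike.coe_mem _
  set x' : H := (((spanPhi φ j N).orthogonalProjectionOnto x : spanPhi φ j N) : H) with hx'def
  have hx'K : x' ∈ spanPhi φ j N := SetLike.coe_mem _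
  have hKV : spanPhi φ j N ≤ V j := by
    rw [spanPhi, Submodule.span_le]
    rintro _ ⟨n, -, rfl⟩
    exact phiLp_mem_V hMRA hφ j n
  have hyV : x - x' ∈ V j := Submodule.sub_mem _ hxV (hKV hx'K)
  have horth : ∀ m : ℤ, ⟪x - x', phiLp φ j m⟫ = 0 := by
    intro m
    by_cases hm : m ∈ Set.Icc (-(N:ℤ)) (N:ℤ)
    · have hmem : phiLp φ j m ∈ spanPhi φ j N := Submodule.subset_span ⟨m, hm, rfl⟩
      have hKorth := Submodule.sub_starProjection_mem_orthogonal (K := spanPhi φ j N) x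
      exact inner_eq_zero_symm.mp ((Submodule.mem_orthogonal _ _).mp hKorth _ hmem)
    · have hmemV : phiLp φ j m ∈ V j := phiLp_mem_V hMRA hφ j m
      have hxm : ⟪x, phiLp φ j m⟫ = 0 := by
        rw [hxproj]
        rw [← Submodule.starProjection_apply, Submodule.inner_starProjection_left_eq_right]
        have heq : (V j).starProjection (phiLp φ j m) = phiLp φ j m := by
          exact (V j).starProjection_eq_self_iff.mpr hmemV
        rw [heq]
        exact h m hm
      have hx'm : ⟪x', phiLp φ j m⟫ = 0 := by
        refine inner_zero_of_mem_span hx'K ?_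
        rintro _ ⟨n, hn, rfl⟩
        rw [phiLp_orthonormal hφ hMRA.orthonormal, if_neg]
        rintro rfl
        exact hm hn
      rw [inner_sub_left, hxm, hx'm, sub_zero]
  have hzero : x - x' = 0 := eq_zero_of_inner_phiLp_zero hMRA hφ hyV horth
  have : x = x' := by
    have := sub_eq_zero.mp hzero
    exact this
  exact this ▸ hx'K

theorem inner_toLp2_phiLp_eq_zero {φ : ℝ → ℝ} (hφ : MemLp φ 2 volume) {A : ℝ}
    (hA : ∀ x : ℝ, A < |x| → φ x = 0) {j : ℤ} {f₀ g₀ : ℝ → ℝ}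
    (hae : f₀ =ᵐ[volume] g₀) {R : ℝ}
    (hsupp : ∀ x : ℝ, R < |(2:ℝ)^j * x| → g₀ x = 0) {m : ℤ}
    (hm : R + A < |(m:ℝ)|) : ⟪toLp2 f₀, phiLp φ j m⟫ = 0 := by
  by_cases hmem : MemLp f₀ 2 volume
  · rw [inner_eq_integral_of_ae ((toLp2_coeFn hmem).trans hae) (phiLp_coeFn hφ j m)]
    have hzero : ∀ x : ℝ, g₀ x * phiJN φ j m x = 0 := by
      intro x
      by_cases hx : R < |(2:ℝ)^j * x|
      · rw [hsupp x hx, zero_mul]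
      · push_neg at hx
        have h1 : A < |(2:ℝ)^j * x - (m:ℝ)| := by
          have h2 : |(m:ℝ)| - |(2:ℝ)^j * x| ≤ |(2:ℝ)^j * x - (m:ℝ)| := by
            rw [abs_sub_comm]
            linarith [abs_sub_abs_le_abs_sub ((m:ℝ)) ((2:ℝ)^j * x)]
          linarith
        rw [phiJN, hA _ h1, mul_zero, mul_zero]
    simp only [hzero]
    exact integral_zero _ _
  · rw [toLp2_of_not hmem, inner_zero_left]

theorem spanPhi_ae_support {φ : ℝ → ℝ} (hφ : MemLp φ 2 volume) {A : ℝ}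
    {j : ℤ} {N : ℕ} {f : H} (hf : f ∈ spanPhi φ j N) :
    ∃ g₀ : ℝ → ℝ, ⇑f =ᵐ[volume] g₀ ∧
      ∀ x : ℝ, (N:ℝ) + A < |(2:ℝ)^j * x| →
        ((∀ y : ℝ, A < |y| → φ y = 0) → g₀ x = 0) := by
  induction hf using Submodule.span_induction with
  | mem u hu =>
    obtain ⟨n, hn, rfl⟩ := hu
    refine ⟨phiJN φ j n, phiLp_coeFn hφ j n, ?_⟩
    intro x hx hA
    have hnabs : |(n:ℝ)| ≤ (N:ℝ) := by
      rw [Set.mem_Icc] at hn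
      rw [abs_le]
      exact ⟨by exact_mod_cast hn.1, by exact_mod_cast hn.2⟩
    have h1 : A < |(2:ℝ)^j * x - (n:ℝ)| := by
      have h2 : |(2:ℝ)^j * x| - |(n:ℝ)| ≤ |(2:ℝ)^j * x - (n:ℝ)| :=
        abs_sub_abs_le_abs_sub _ _
      linarith
    rw [phiJN, hA _ h1, mul_zero]
  | zero =>
    exact ⟨0, Lp.coeFn_zero ℝ 2 volume, fun _ _ _ => rfl⟩
  | add u w hu hw ihu ihw =>
    obtain ⟨gu, hgu, hgu0⟩ := ihu
    obtain ⟨gw, hgw, hgw0⟩ := ihw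
    refine ⟨fun x => gu x + gw x, (Lp.coeFn_add u w).trans (hgu.add hgw), ?_⟩
    intro x hx hA
    show gu x + gw x = 0
    rw [hgu0 x hx hA, hgw0 x hx hA, add_zero]
  | smul a u hu ihu =>
    obtain ⟨gu, hgu, hgu0⟩ := ihu
    refine ⟨fun x => a * gu x, (Lp.coeFn_smul a u).trans ?_, ?_⟩
    · exact hgu.mono fun x hx => by simp [hx]
    · intro x hx hA
      show a * gu x = 0
      rw [hgu0 x hx hA, mul_zero]



/-- **Common support of the layers of a CGNN.** Under Hypothesis 2 on the convolutional
filters (and biases that are finite combinations of the `φ_{j_l,·}`) and Hypothesis 4 on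
the fully connected layer, the image of each layer of `G` is contained in a finite span
`(span{φ_{j_l,n} : −N_l ≤ n ≤ N_l})^{c_l}`, and similarly for the image of `Ψ̃_{l+1}`
applied after the first `l` blocks. -/
theorem cgnn_layers_common_support {L S : ℕ} {j₁ : ℤ} (hL : 1 ≤ L) (Γ : CGNNData L S j₁)
    -- the MRA, with compactly supported bounded scaling function
    (hMRA : IsMRA Γ.φ Γ.V)
    (hφL2 : MemLp Γ.φ 2 volume)
    (hφsupp : HasCompactSupport Γ.φ)
    (hφbdd : ∃ C : ℝ, ∀ x : ℝ, |Γ.φ x| ≤ C)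
    -- Hypothesis 2 : the matrices D^l are invertible (filters are finite combinations of
    -- the φ_{j_l,p} by construction); the biases are finite combinations of the φ_{j_l,n}
    (hdet : ∀ l : ℕ, 1 ≤ l → l ≤ L - 1 → (Γ.Dmat l).det ≠ 0)
    (hbias : ∀ l k : ℕ, 1 ≤ l → l ≤ L - 1 → k < cc L l →
      ∃ Nb : ℕ, Γ.bias l k ∈ spanPhi Γ.φ (jj j₁ l) Nb)
    -- the nonlinearity acts pointwise and has linear growth
    (C : ℝ) (hC : 0 < C) (hσgrowth : ∀ x : ℝ, |Γ.σ x| ≤ C * |x|)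
    -- Hypothesis 4
    (hFinj : Function.Injective Γ.F)
    (hFN : ∃ N : ℕ, (∀ (z : Fin S → ℝ) (k : Fin (2 ^ (L - 1))),
        Γ.F z k ∈ spanPhi Γ.φ j₁ N) ∧ ∀ k : Fin (2 ^ (L - 1)), Γ.b0 k ∈ spanPhi Γ.φ j₁ N) :
    -- the image of the first l+1 blocks lies in a common finite span at scale j_l
    (∀ l : ℕ, l ≤ L - 1 → ∃ Nl : ℕ, ∀ (z : Fin S → ℝ) (k : Fin (cc L l)),
      Γ.Gaux l z k ∈ spanPhi Γ.φ (jj j₁ l) Nl) ∧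
    -- and so does the image of Ψ̃_{l+1} applied after the first l+1 blocks
    (∀ l : ℕ, l + 1 ≤ L - 1 → ∃ Nl' : ℕ, ∀ (z : Fin S → ℝ) (k : Fin (cc L (l + 1))),
      Γ.psiT l (Γ.Gaux l z) k ∈ spanPhi Γ.φ (jj j₁ (l + 1)) Nl') := by
  classical
  -- a natural-number support radius for φ
  obtain ⟨A0, hA0⟩ : ∃ A0 : ℝ, ∀ x : ℝ, A0 < |x| → Γ.φ x = 0 := by
    obtain ⟨r, hr⟩ := hφsupp.isBounded.subset_closedBall 0
    refine ⟨r, fun x hx => ?_⟩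
    apply image_eq_zero_of_notMem_tsupport
    intro hmem
    have := hr hmem
    rw [Metric.mem_closedBall, Real.dist_eq, sub_zero] at this
    linarith
  obtain ⟨Aℕ, hAℕ⟩ := exists_nat_ge A0
  set A : ℝ := (Aℕ : ℝ) with hAdef
  have hA : ∀ x : ℝ, A < |x| → Γ.φ x = 0 := fun x hx => hA0 x (lt_of_le_of_lt hAℕ hx)
  have hσ0 : Γ.σ 0 = 0 := by
    have h := hσgrowth 0
    rw [abs_zero, mul_zero] at h
    exact abs_eq_zero.mp (le_antisymm h (abs_nonneg _))
  -- the nonlinearity step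
  have sigmaStep : ∀ (j : ℤ) (N : ℕ) (f : H), f ∈ spanPhi Γ.φ j N →
      projCL (Γ.V j) (Γ.Vclosed j) (toLp2 fun x => Γ.σ (f x)) ∈
        spanPhi Γ.φ j (N + 2 * Aℕ) := by
    intro j N f hf
    obtain ⟨g₀, hae, hsupp⟩ := spanPhi_ae_support hφL2 hf
    refine proj_mem_spanPhi hMRA hφL2 _ _ _ ?_
    intro m hm
    have hmabs : ((N + 2 * Aℕ : ℕ) : ℝ) < |(m:ℝ)| := by
      rw [Set.mem_Icc, ← abs_le] at hm
      push_neg at hm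
      have : ((N + 2 * Aℕ : ℕ) : ℤ) < |m| := hm
      calc ((N + 2 * Aℕ : ℕ) : ℝ) < ((|m| : ℤ) : ℝ) := by exact_mod_cast this
        _ = |(m:ℝ)| := by push_cast; ring
    refine inner_toLp2_phiLp_eq_zero hφL2 hA
      (f₀ := fun x => Γ.σ (f x)) (g₀ := fun x => Γ.σ (g₀ x))
      (hae.mono fun x hx => by simp only [hx]) (R := (N:ℝ) + A) ?_ ?_
    · intro x hx
      show Γ.σ (g₀ x) = 0
      rw [hsupp x hx hA, hσ0]
    · push_cast at hmabs ⊢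
      linarith [hAdef]
  -- the convolutional step
  have psiStep : ∀ l : ℕ, l + 1 ≤ L - 1 → ∃ B : ℕ,
      ∀ (N : ℕ) (f : Fin (cc L l) → H) (k : Fin (cc L (l+1))),
        (∀ i, f i ∈ spanPhi Γ.φ (jj j₁ l) N) →
        Γ.psiT l f k ∈ spanPhi Γ.φ (jj j₁ (l+1)) (2*(N + Aℕ) + Γ.pbar + 2*Aℕ + B) := by
    intro l hl
    have hbk : ∀ k : Fin (cc L (l+1)), ∃ Nb : ℕ,
        Γ.bias (l+1) (k : ℕ) ∈ spanPhi Γ.φ (jj j₁ (l+1)) Nb :=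
      fun k => hbias (l+1) k (Nat.le_add_left 1 l) hl k.isLt
    choose Nb hNb using hbk
    refine ⟨Finset.univ.sup Nb, ?_⟩
    intro N f k hf
    set M : ℕ := 2*(N + Aℕ) + Γ.pbar + 2*Aℕ + Finset.univ.sup Nb with hMdef
    refine proj_mem_spanPhi hMRA hφL2 _ _ _ ?_
    intro m hm
    have hmabs : ((M : ℕ) : ℝ) < |(m:ℝ)| := by
      rw [Set.mem_Icc, ← abs_le] at hm
      push_neg at hm
      have : ((M : ℕ) : ℤ) < |m| := hm
      calc ((M : ℕ) : ℝ) < ((|m| : ℤ) : ℝ) := by exact_mod_cast this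
        _ = |(m:ℝ)| := by push_cast; ring
    rw [inner_add_left]
    -- the scale relation 2^{j_{l+1}} = 2 * 2^{j_l}
    have hjj : (2:ℝ) ^ (jj j₁ (l+1)) = 2 * (2:ℝ) ^ (jj j₁ l) := by
      have h1 : jj j₁ (l+1) = jj j₁ l + 1 := by simp [jj]; push_cast; ring
      rw [h1, zpow_add₀ (two_ne_zero' ℝ), zpow_one]
      ring
    -- the filters vanish far out
    have hfilt : ∀ (i : Fin (cc L l)) (t : ℝ),
        (Γ.pbar : ℝ) + A < |(2:ℝ) ^ (jj j₁ (l+1)) * t| → Γ.filt (l+1) i k t = 0 := by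
      intro i t ht
      rw [CGNNData.filt]
      refine Finset.sum_eq_zero fun p hp => ?_
      have hple : (p : ℝ) ≤ (Γ.pbar : ℝ) := by
        exact_mod_cast Nat.lt_succ_iff.mp (Finset.mem_range.mp hp)
      have h1 : A < |(2:ℝ) ^ (jj j₁ (l+1)) * t - ((p:ℤ) : ℝ)| := by
        have h2 : |(2:ℝ) ^ (jj j₁ (l+1)) * t| - |((p:ℤ) : ℝ)| ≤
            |(2:ℝ) ^ (jj j₁ (l+1)) * t - ((p:ℤ) : ℝ)| := abs_sub_abs_le_abs_sub _ _
        have h3 : |((p:ℤ) : ℝ)| = (p : ℝ) := by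
          push_cast
          exact abs_of_nonneg (Nat.cast_nonneg p)
        rw [h3] at h2
        linarith
      rw [phiJN, hA _ h1, mul_zero, mul_zero]
    -- the convolution part vanishes far out
    have hconv : ⟪toLp2 (fun x => ∑ i : Fin (cc L l),
        conv (⇑(f i)) (Γ.filt (l+1) i (k : ℕ)) x), phiLp Γ.φ (jj j₁ (l+1)) m⟫ = 0 := by
      have hch : ∀ i, ∃ g₀ : ℝ → ℝ, ⇑(f i) =ᵐ[volume] g₀ ∧
          ∀ x : ℝ, (N:ℝ) + A < |(2:ℝ) ^ (jj j₁ l) * x| →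
            ((∀ y : ℝ, A < |y| → Γ.φ y = 0) → g₀ x = 0) :=
        fun i => spanPhi_ae_support hφL2 (hf i)
      choose g₀ hg₀ae hg₀supp using hch
      have hvanish : ∀ x : ℝ, 2*((N:ℝ)+A) + ((Γ.pbar:ℝ) + A) < |(2:ℝ) ^ (jj j₁ (l+1)) * x| →
          (∑ i : Fin (cc L l), conv (⇑(f i)) (Γ.filt (l+1) i (k : ℕ)) x) = 0 := by
        intro x hx
        refine Finset.sum_eq_zero fun i _ => ?_
        rw [conv]
        have hcongr : (fun y => (⇑(f i)) y * Γ.filt (l+1) i (k:ℕ) (x - y)) =ᵐ[volume]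
            (fun y => g₀ i y * Γ.filt (l+1) i (k:ℕ) (x - y)) :=
          (hg₀ae i).mono fun y hy => by simp only [hy]
        rw [integral_congr_ae hcongr]
        have hzero : ∀ y : ℝ, g₀ i y * Γ.filt (l+1) i (k:ℕ) (x - y) = 0 := by
          intro y
          by_cases hy : (N:ℝ) + A < |(2:ℝ) ^ (jj j₁ l) * y|
          · rw [hg₀supp i y hy hA, zero_mul]
          · push_neg at hy
            have hyy : |(2:ℝ) ^ (jj j₁ (l+1)) * y| ≤ 2*((N:ℝ)+A) := by
              rw [hjj, mul_assoc, abs_mul, abs_two]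
              linarith
            have hfar : (Γ.pbar : ℝ) + A < |(2:ℝ) ^ (jj j₁ (l+1)) * (x - y)| := by
              have h1 : (2:ℝ) ^ (jj j₁ (l+1)) * (x - y) =
                  (2:ℝ) ^ (jj j₁ (l+1)) * x - (2:ℝ) ^ (jj j₁ (l+1)) * y := by ring
              have h2 : |(2:ℝ) ^ (jj j₁ (l+1)) * x| - |(2:ℝ) ^ (jj j₁ (l+1)) * y| ≤
                  |(2:ℝ) ^ (jj j₁ (l+1)) * x - (2:ℝ) ^ (jj j₁ (l+1)) * y| :=
                abs_sub_abs_le_abs_sub _ _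
              rw [h1]
              linarith
            rw [hfilt i (x - y) hfar, mul_zero]
        simp only [hzero]
        exact integral_zero _ _
      refine inner_toLp2_phiLp_eq_zero hφL2 hA (Filter.EventuallyEq.refl _ _)
        (R := 2*((N:ℝ)+A) + ((Γ.pbar:ℝ) + A)) hvanish ?_
      have hMeq : ((M:ℕ) : ℝ) = 2*((N:ℝ)+A) + ((Γ.pbar:ℝ) + A) + A +
          ((Finset.univ.sup Nb : ℕ) : ℝ) := by
        rw [hMdef, hAdef]; push_cast; ring
      have hsupnn : (0:ℝ) ≤ ((Finset.univ.sup Nb : ℕ) : ℝ) := Nat.cast_nonneg _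
      linarith [hmabs, hMeq]
    have hb0 : ⟪Γ.bias (l+1) (k : ℕ), phiLp Γ.φ (jj j₁ (l+1)) m⟫ = 0 := by
      refine inner_zero_of_mem_span (hNb k) ?_
      rintro _ ⟨n, hn, rfl⟩
      rw [phiLp_orthonormal hφL2 hMRA.orthonormal, if_neg]
      rintro rfl
      rw [Set.mem_Icc] at hn
      have h1 : |n| ≤ (Nb k : ℤ) := abs_le.mpr hn
      have hsup : Nb k ≤ M := by
        have := Finset.le_sup (f := Nb) (Finset.mem_univ k)
        omega
      have h2 : (Nb k : ℤ) ≤ (M : ℤ) := by exact_mod_cast hsup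
      have h3 : ((M:ℕ) : ℝ) < |(n:ℝ)| := hmabs
      have h4 : |(n:ℝ)| = ((|n| : ℤ) : ℝ) := by rw [Int.cast_abs]
      rw [h4] at h3
      have : ((M:ℕ):ℤ) < |n| := by exact_mod_cast h3
      omega
    rw [hconv, hb0, add_zero]
  -- assembling the layers
  have key : ∀ l : ℕ, l ≤ L - 1 → ∃ Nl : ℕ, ∀ (z : Fin S → ℝ) (k : Fin (cc L l)),
      Γ.Gaux l z k ∈ spanPhi Γ.φ (jj j₁ l) Nl := by
    intro l
    induction l with
    | zero =>
      intro _
      obtain ⟨N, hF, hb⟩ := hFN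
      refine ⟨N + 2*Aℕ, fun z k => ?_⟩
      have hmem : Γ.F z k + Γ.b0 k ∈ spanPhi Γ.φ (jj j₁ 0) N := by
        have h0 : jj j₁ 0 = j₁ := by simp [jj]
        rw [h0]
        exact Submodule.add_mem _ (hF z k) (hb k)
      exact sigmaStep (jj j₁ 0) N _ hmem
    | succ l ih =>
      intro hl
      obtain ⟨N, hN⟩ := ih (le_trans (Nat.le_succ l) hl)
      obtain ⟨B, hB⟩ := psiStep l hl
      refine ⟨2*(N + Aℕ) + Γ.pbar + 2*Aℕ + B + 2*Aℕ, fun z k => ?_⟩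
      exact sigmaStep (jj j₁ (l+1)) _ _ (hB N (Γ.Gaux l z) k (fun i => hN z i))
  refine ⟨key, ?_⟩
  intro l hl
  obtain ⟨N, hN⟩ := key l (le_trans (Nat.le_succ l) hl)
  obtain ⟨B, hB⟩ := psiStep l hl
  exact ⟨_, fun z k => hB N (Γ.Gaux l z) k (fun i => hN z i)⟩
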